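/- arXiv:2507.18090 — 2 statements merged into one kernel-verified Lean document; each statement's English description precedes it below -/
import Mathlib

section
/- Let G be a planar simple graph with minimum degree at least 2 such that every two distinct vertices of G have at most two common neighbors. Then G contains an edge uv with d(u) + d(v) ≤ 39. -/
/-- `H` is a minor of `G`: there is a family of disjoint connected branch sets in `G`,
one for each vertex of `H`, with an edge of `G` between the branch sets of any two
adjacent vertices of `H`. -/
def SimpleGraph.HasMinor {V : Type*} {W : Type*} (G : SimpleGraph V) (H : SimpleGraph W) : Prop :=
  ∃ f : W → Set V,
    (∀ w, (SimpleGraph.induce (f w) G).Connected) ∧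
    (∀ w₁ w₂, w₁ ≠ w₂ → Disjoint (f w₁) (f w₂)) ∧
    (∀ w₁ w₂, H.Adj w₁ w₂ → ∃ x ∈ f w₁, ∃ y ∈ f w₂, G.Adj x y)

/-- A simple graph is planar iff it has neither `K₅` nor `K₃,₃` as a minor
(Wagner's theorem). -/
def SimpleGraph.IsPlanar {V : Type*} (G : SimpleGraph V) : Prop :=
  ¬ G.HasMinor (completeGraph (Fin 5)) ∧ ¬ G.HasMinor (completeBipartiteGraph (Fin 3) (Fin 3))

/-- `G` is `k`-connected: more than `k` vertices, and removing fewer than `k` vertices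
leaves a connected graph. -/
def SimpleGraph.IsKConnected {V : Type*} [Fintype V] (k : ℕ) (G : SimpleGraph V) : Prop :=
  k < Fintype.card V ∧
    ∀ s : Set V, s.ncard < k → (SimpleGraph.induce sᶜ G).Connected

/-- The number of cycles of length `k` in `G`, counted as (cycle) subgraphs. -/
noncomputable def SimpleGraph.cycleCount {V : Type*} (G : SimpleGraph V) (k : ℕ) : ℕ :=
  Nat.card {H : G.Subgraph // ∃ (v : V) (w : G.Walk v v),
    w.IsCycle ∧ w.length = k ∧ w.toSubgraph = H}

/-- A planar triangulation: an edge-maximal planar graph on at least 3 vertices. -/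
def SimpleGraph.IsPlanarTriangulation {V : Type*} [Fintype V] (G : SimpleGraph V) : Prop :=
  3 ≤ Fintype.card V ∧ G.IsPlanar ∧
    ∀ u v : V, u ≠ v → ¬ G.Adj u v →
      ¬ (G ⊔ SimpleGraph.fromEdgeSet {s(u, v)}).IsPlanar


open SimpleGraph

namespace SG6

variable {V : Type*} {W : Type*} {X : Type*}

lemma reach_mono {G : SimpleGraph V} {A B : Set V} (hAB : A ⊆ B) {x y : ↥A}
    (h : (G.induce A).Reachable x y) :
    (G.induce B).Reachable ⟨x.1, hAB x.2⟩ ⟨y.1, hAB y.2⟩ := by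
  exact h.map (G.induceHomOfLE hAB).toHom

lemma star_connected {G : SimpleGraph V} {c : V} {t : Set V} (h : ∀ x ∈ t, G.Adj c x) :
    (G.induce (insert c t)).Connected := by
  rw [connected_iff]
  refine ⟨?_, ⟨⟨c, Set.mem_insert _ _⟩⟩⟩
  have key : ∀ z : ↥(insert c t), (G.induce (insert c t)).Reachable z ⟨c, Set.mem_insert _ _⟩ := by
    rintro ⟨z, hz⟩
    rcases hz with rfl | hz
    · exact Reachable.refl _
    · have : (G.induce (insert c t)).Adj ⟨z, Set.mem_insert_of_mem _ hz⟩ ⟨c, Set.mem_insert _ _⟩ :=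
        (h z hz).symm
      exact this.reachable
  exact fun x y => (key x).trans (key y).symm

lemma singleton_connected (G : SimpleGraph V) (c : V) :
    (G.induce {c}).Connected := by
  rw [show ({c} : Set V) = insert c ∅ by simp]
  exact star_connected (by simp)

lemma hasMinor_of_map {G : SimpleGraph V} {H : SimpleGraph W} (f : W → V)
    (hinj : Function.Injective f) (hadj : ∀ a b, H.Adj a b → G.Adj (f a) (f b)) :
    G.HasMinor H := by
  refine ⟨fun w => {f w}, fun w => singleton_connected G (f w), ?_, ?_⟩
  · intro a b hab
    simp [Set.disjoint_singleton, hinj.ne hab]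
  · intro a b hab
    exact ⟨f a, rfl, f b, rfl, hadj _ _ hab⟩

lemma hasMinor_mono {G G' : SimpleGraph V} (h : G ≤ G') {H : SimpleGraph W}
    (hm : G.HasMinor H) : G'.HasMinor H := by
  obtain ⟨f, fconn, fdisj, fadj⟩ := hm
  refine ⟨f, fun w => (fconn w).mono ?_, fdisj, ?_⟩
  · intro a b hab
    exact h hab
  · intro a b hab
    obtain ⟨x, hx, y, hy, hxy⟩ := fadj _ _ hab
    exact ⟨x, hx, y, hy, h hxy⟩

lemma hasMinor_trans {G : SimpleGraph V} {H : SimpleGraph W} {K : SimpleGraph X}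
    (h1 : G.HasMinor H) (h2 : H.HasMinor K) : G.HasMinor K := by
  obtain ⟨f, fconn, fdisj, fadj⟩ := h1
  obtain ⟨g, gconn, gdisj, gadj⟩ := h2
  refine ⟨fun x => ⋃ w ∈ g x, f w, ?_, ?_, ?_⟩
  · intro x
    have hsub : ∀ w (_ : w ∈ g x), f w ⊆ ⋃ w ∈ g x, f w :=
      fun w hw => Set.subset_biUnion_of_mem hw
    have R1 : ∀ w (hw : w ∈ g x) a b (ha : a ∈ f w) (hb : b ∈ f w),
        (G.induce (⋃ w ∈ g x, f w)).Reachable ⟨a, hsub w hw ha⟩ ⟨b, hsub w hw hb⟩ := by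
      intro w hw a b ha hb
      exact reach_mono (hsub w hw) ((fconn w).preconnected ⟨a, ha⟩ ⟨b, hb⟩)
    have R2 : ∀ (w₁ w₂ : ↥(g x)) (_ : (H.induce (g x)).Walk w₁ w₂)
        (a : V) (ha : a ∈ f ↑w₁) (b : V) (hb : b ∈ f ↑w₂),
        (G.induce (⋃ w ∈ g x, f w)).Reachable ⟨a, hsub _ w₁.2 ha⟩ ⟨b, hsub _ w₂.2 hb⟩ := by
      intro w₁ w₂ p
      induction p with
      | nil => intro a ha b hb; exact R1 _ (Subtype.mem _) _ _ ha hb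
      | @cons u w v h p ih =>
        intro a ha b hb
        have hH : H.Adj ↑u ↑w := h
        obtain ⟨p₁, hp₁, q₁, hq₁, hGpq⟩ := fadj _ _ hH
        have r1 := R1 _ u.2 a p₁ ha hp₁
        have redge : (G.induce (⋃ w ∈ g x, f w)).Adj ⟨p₁, hsub _ u.2 hp₁⟩ ⟨q₁, hsub _ w.2 hq₁⟩ :=
          hGpq
        exact (r1.trans redge.reachable).trans (ih q₁ hq₁ b hb)
    rw [connected_iff]
    constructor
    · rintro ⟨a, ha⟩ ⟨b, hb⟩
      simp only [Set.mem_iUnion] at ha hb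
      obtain ⟨w₁, hw₁, ha⟩ := ha
      obtain ⟨w₂, hw₂, hb⟩ := hb
      exact ((gconn x).preconnected ⟨w₁, hw₁⟩ ⟨w₂, hw₂⟩).elim
        fun p => R2 ⟨w₁, hw₁⟩ ⟨w₂, hw₂⟩ p a ha b hb
    · obtain ⟨⟨w, hw⟩⟩ := (gconn x).nonempty
      obtain ⟨⟨a, ha⟩⟩ := (fconn w).nonempty
      exact ⟨⟨a, Set.mem_biUnion hw ha⟩⟩
  · intro x₁ x₂ hne
    rw [Set.disjoint_left]
    rintro a ha ha'
    simp only [Set.mem_iUnion] at ha ha'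
    obtain ⟨w₁, hw₁, haw₁⟩ := ha
    obtain ⟨w₂, hw₂, haw₂⟩ := ha'
    have hww : w₁ ≠ w₂ := fun h => (gdisj _ _ hne).ne_of_mem hw₁ (h ▸ hw₂) rfl
    exact (fdisj _ _ hww).ne_of_mem haw₁ haw₂ rfl
  · intro x₁ x₂ hadj
    obtain ⟨w₁, hw₁, w₂, hw₂, hH⟩ := gadj _ _ hadj
    obtain ⟨a, ha, b, hb, hG⟩ := fadj _ _ hH
    exact ⟨a, Set.mem_biUnion hw₁ ha, b, Set.mem_biUnion hw₂ hb, hG⟩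

end SG6
section Stage2
namespace SG6
open SimpleGraph
variable {V : Type*} [DecidableEq V]

/-- Contract the edge `uv`, realized on the subtype of vertices distinct from `v`. -/
def contract (G : SimpleGraph V) (u v : V) : SimpleGraph {x : V // x ≠ v} where
  Adj a b := a ≠ b ∧ (G.Adj a b ∨ ((a : V) = u ∧ G.Adj v b) ∨ ((b : V) = u ∧ G.Adj ↑a v))
  symm := by
    constructor
    rintro a b ⟨hab, h⟩
    refine ⟨hab.symm, ?_⟩
    rcases h with h | ⟨h1, h2⟩ | ⟨h1, h2⟩
    · exact Or.inl h.symm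
    · exact Or.inr (Or.inr ⟨h1, h2.symm⟩)
    · exact Or.inr (Or.inl ⟨h1, h2.symm⟩)
  loopless := ⟨fun a h => h.1 rfl⟩

instance contractDecidable (G : SimpleGraph V) [DecidableRel G.Adj] (u v : V) :
    DecidableRel (contract G u v).Adj := fun a b =>
  decidable_of_iff (a ≠ b ∧ (G.Adj a b ∨ ((a : V) = u ∧ G.Adj v b ∨ (b : V) = u ∧ G.Adj ↑a v)))
    (by unfold contract; tauto)

lemma hasMinor_contract (G : SimpleGraph V) {u v : V} (huv : G.Adj u v) :
    G.HasMinor (contract G u v) := by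
  have hmem : ∀ w : {x : V // x ≠ v},
      (w : V) ∈ (if (w : V) = u then ({u, v} : Set V) else {(w : V)}) := by
    intro w
    split <;> simp_all
  refine ⟨fun w => if (w : V) = u then {u, v} else {(w : V)}, ?_, ?_, ?_⟩
  · intro w
    show (G.induce (if (w : V) = u then ({u, v} : Set V) else {(w : V)})).Connected
    by_cases h : (w : V) = u
    · rw [if_pos h]
      have h2 : ({u, v} : Set V) = insert u {v} := rfl
      rw [h2]
      exact star_connected (by simpa using huv)
    · rw [if_neg h]
      exact singleton_connected G _
  · intro a b hne
    have hval : (a : V) ≠ (b : V) := fun h => hne (Subtype.ext h)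
    show Disjoint (if (a : V) = u then ({u, v} : Set V) else {(a : V)})
      (if (b : V) = u then ({u, v} : Set V) else {(b : V)})
    by_cases ha : (a : V) = u <;> by_cases hb : (b : V) = u
    · exact absurd (Subtype.ext (ha.trans hb.symm)) hne
    · rw [if_pos ha, if_neg hb, Set.disjoint_left]
      rintro x hx hx'
      simp only [Set.mem_insert_iff, Set.mem_singleton_iff] at hx hx'
      rcases hx with rfl | rfl
      · exact hb hx'.symm
      · exact b.2 hx'.symm
    · rw [if_neg ha, if_pos hb, Set.disjoint_left]
      rintro x hx hx'
      simp only [Set.mem_insert_iff, Set.mem_singleton_iff] at hx hx'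
      subst hx
      rcases hx' with h | h
      · exact ha h
      · exact a.2 h
    · rw [if_neg ha, if_neg hb]
      simpa using hval
  · rintro a b ⟨hne, h | ⟨h1, h2⟩ | ⟨h1, h2⟩⟩
    · exact ⟨a, hmem a, b, hmem b, h⟩
    · refine ⟨v, ?_, b, hmem b, h2⟩
      show v ∈ (if (a : V) = u then ({u, v} : Set V) else {(a : V)})
      rw [if_pos h1]; simp
    · refine ⟨a, hmem a, v, ?_, h2⟩
      show v ∈ (if (b : V) = u then ({u, v} : Set V) else {(b : V)})
      rw [if_pos h1]; simp

lemma card_edge_le_of_map {W : Type*} {G : SimpleGraph V} {G₂ : SimpleGraph W}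
    [Fintype G.edgeSet] [Fintype G₂.edgeSet] (r : V → W) (B : Finset (Sym2 V))
    (hmap : ∀ e ∈ G.edgeFinset, e ∉ B → Sym2.map r e ∈ G₂.edgeFinset)
    (hinj : Set.InjOn (Sym2.map r) ↑(G.edgeFinset \ B)) :
    G.edgeFinset.card ≤ G₂.edgeFinset.card + B.card := by
  classical
  have h1 : (G.edgeFinset \ B).card ≤ G₂.edgeFinset.card := by
    rw [← Finset.card_image_of_injOn hinj]
    apply Finset.card_le_card
    intro e he
    obtain ⟨e₀, he₀, rfl⟩ := Finset.mem_image.mp he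
    rw [Finset.mem_sdiff] at he₀
    exact hmap _ he₀.1 he₀.2
  calc G.edgeFinset.card ≤ (G.edgeFinset \ B).card + B.card :=
        Finset.card_le_card_sdiff_add_card
    _ ≤ _ := by omega

/-- Deleting a vertex loses at most `degree v` edges. -/
lemma card_edge_delete [Fintype V] (G : SimpleGraph V) [DecidableRel G.Adj] (v : V)
    (w₀ : {x : V // x ≠ v}) :
    G.edgeFinset.card ≤
      (G.comap (Subtype.val : {x : V // x ≠ v} → V)).edgeFinset.card + G.degree v := by
  classical
  rw [← G.card_incidenceFinset_eq_degree]
  set r : V → {x : V // x ≠ v} := fun x => if h : x = v then w₀ else ⟨x, h⟩ with hr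
  have hrval : ∀ x (h : x ≠ v), r x = ⟨x, h⟩ := fun x h => dif_neg h
  apply card_edge_le_of_map r
  · intro e he hne
    have hv : v ∉ e := by
      intro hv
      exact hne (by rw [mem_incidenceFinset]; exact ⟨(mem_edgeFinset.mp he), hv⟩)
    induction e with
    | h x y =>
      rw [Sym2.mem_iff] at hv
      push_neg at hv
      rw [Sym2.map_pair_eq, hrval x (Ne.symm hv.1), hrval y (Ne.symm hv.2), mem_edgeFinset,
        mem_edgeSet]
      exact G.mem_edgeSet.mp (mem_edgeFinset.mp he)
  · rintro e₁ he₁ e₂ he₂ heq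
    simp only [Finset.coe_sdiff, Set.mem_diff, Finset.mem_coe, Finset.mem_sdiff] at he₁ he₂
    induction e₁ with
    | h x y =>
      induction e₂ with
      | h x' y' =>
        have hv₁ : v ∉ s(x, y) := fun hv =>
          he₁.2 (by rw [mem_incidenceFinset]; exact ⟨mem_edgeFinset.mp he₁.1, hv⟩)
        have hv₂ : v ∉ s(x', y') := fun hv =>
          he₂.2 (by rw [mem_incidenceFinset]; exact ⟨mem_edgeFinset.mp he₂.1, hv⟩)
        rw [Sym2.mem_iff] at hv₁ hv₂
        push_neg at hv₁ hv₂
        rw [Sym2.map_pair_eq, Sym2.map_pair_eq,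
          hrval x (Ne.symm hv₁.1), hrval y (Ne.symm hv₁.2), hrval x' (Ne.symm hv₂.1),
          hrval y' (Ne.symm hv₂.2), Sym2.eq_iff] at heq
        rw [Sym2.eq_iff]
        rcases heq with ⟨h1, h2⟩ | ⟨h1, h2⟩
        · exact Or.inl ⟨congrArg Subtype.val h1, congrArg Subtype.val h2⟩
        · exact Or.inr ⟨congrArg Subtype.val h1, congrArg Subtype.val h2⟩

/-- Contracting an edge loses at most `1 + #common neighbours` edges. -/
lemma card_edge_contract [Fintype V] (G : SimpleGraph V) [DecidableRel G.Adj] {u v : V}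
    (huv : G.Adj u v) :
    G.edgeFinset.card ≤ (contract G u v).edgeFinset.card +
      (1 + (G.neighborFinset u ∩ G.neighborFinset v).card) := by
  classical
  have hune : u ≠ v := huv.ne
  set B : Finset (Sym2 V) :=
    insert s(u, v) ((G.neighborFinset u ∩ G.neighborFinset v).image fun c => s(v, c)) with hBdef
  have hBcard : B.card ≤ 1 + (G.neighborFinset u ∩ G.neighborFinset v).card := by
    calc B.card ≤ _ + 1 := Finset.card_insert_le _ _
      _ ≤ (G.neighborFinset u ∩ G.neighborFinset v).card + 1 := by
          gcongr; exact Finset.card_image_le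
      _ = _ := by omega
  have hBuv : s(u, v) ∈ B := Finset.mem_insert_self _ _
  have hBcommon : ∀ x, G.Adj u x → G.Adj v x → s(v, x) ∈ B := by
    intro x h1 h2
    exact Finset.mem_insert_of_mem (Finset.mem_image.mpr ⟨x, by simp [h1, h2], rfl⟩)
  set r : V → {x : V // x ≠ v} := fun x => if h : x = v then ⟨u, hune⟩ else ⟨x, h⟩ with hr
  have hrval : ∀ x (h : x ≠ v), r x = ⟨x, h⟩ := fun x h => dif_neg h
  have hrv : r v = ⟨u, hune⟩ := dif_pos rfl
  have hrcoll : ∀ x y, r x = r y → x = y ∨ (x = v ∧ y = u) ∨ (x = u ∧ y = v) := by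
    intro x y h
    by_cases hx : x = v <;> by_cases hy : y = v
    · left; rw [hx, hy]
    · rw [hx, hrv, hrval y hy] at h
      right; left
      exact ⟨hx, (congrArg Subtype.val h).symm⟩
    · rw [hy, hrv, hrval x hx] at h
      right; right
      exact ⟨congrArg Subtype.val h, hy⟩
    · left
      rw [hrval x hx, hrval y hy] at h
      exact congrArg Subtype.val h
  have key := card_edge_le_of_map (G := G) (G₂ := contract G u v) r B ?_ ?_
  · omega
  · intro e he hne
    induction e with
    | h x y =>
      have hadj : G.Adj x y := mem_edgeFinset.mp he
      by_cases hx : x = v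
      · rw [hx] at hadj hne ⊢
        have hyv : y ≠ v := hadj.ne'
        have hyu : y ≠ u := by
          rintro rfl
          exact hne (by rwa [Sym2.eq_swap])
        rw [Sym2.map_pair_eq, hrv, hrval y hyv, mem_edgeFinset]
        exact ⟨by simp [Subtype.ext_iff]; exact (Ne.symm hyu), Or.inr (Or.inl ⟨rfl, hadj⟩)⟩
      · by_cases hy : y = v
        · subst hy
          have hxu : x ≠ u := by
            rintro rfl
            exact hne hBuv
          rw [Sym2.map_pair_eq, hrv, hrval x hx, mem_edgeFinset]
          exact ⟨by simp [Subtype.ext_iff]; exact hxu, Or.inr (Or.inr ⟨rfl, hadj⟩)⟩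
        · rw [Sym2.map_pair_eq, hrval x hx, hrval y hy, mem_edgeFinset]
          exact ⟨by simp [Subtype.ext_iff]; exact hadj.ne, Or.inl hadj⟩
  · -- injectivity
    have aux : ∀ x y x' y', s(x, y) ∈ G.edgeFinset → s(x, y) ∉ B →
        s(x', y') ∈ G.edgeFinset → s(x', y') ∉ B → r x = r x' → r y = r y' →
        s(x, y) = s(x', y') := by
      intro x y x' y' he₁ hb₁ he₂ hb₂ hx hy
      have hadj₁ : G.Adj x y := mem_edgeFinset.mp he₁
      have hadj₂ : G.Adj x' y' := mem_edgeFinset.mp he₂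
      rcases hrcoll _ _ hx with h | ⟨h1, h2⟩ | ⟨h1, h2⟩ <;>
        rcases hrcoll _ _ hy with h' | ⟨h1', h2'⟩ | ⟨h1', h2'⟩
      · rw [h, h']
      · -- x = x', y = v, y' = u
        exfalso; apply hb₁
        rw [h1', Sym2.eq_swap]
        refine hBcommon x ?_ ?_
        · rw [h, ← h2']; exact hadj₂.symm
        · rw [← h1']; exact hadj₁.symm
      · -- x = x', y = u, y' = v
        exfalso; apply hb₂
        rw [h2', Sym2.eq_swap]
        refine hBcommon x' ?_ ?_
        · rw [← h, ← h1']; exact hadj₁.symm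
        · rw [← h2']; exact hadj₂.symm
      · -- x = v, x' = u, y = y'
        exfalso; apply hb₁
        rw [h1]
        refine hBcommon y ?_ ?_
        · rw [← h2, h']; exact hadj₂
        · rw [← h1]; exact hadj₁
      · -- x = v, x' = u, y = v, y' = u : loop in e₁
        exfalso
        rw [h1, h1'] at hadj₁
        exact G.loopless.irrefl v hadj₁
      · -- x = v, x' = u, y = u, y' = v : e₁ = s(v,u) ∈ B
        exfalso; apply hb₁
        rw [h1, h1', Sym2.eq_swap]
        exact hBuv
      · -- x = u, x' = v, y = y'
        exfalso; apply hb₂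
        rw [h2]
        refine hBcommon y' ?_ ?_
        · rw [← h1, ← h']; exact hadj₁
        · rw [← h2]; exact hadj₂
      · -- x = u, x' = v, y = v, y' = u : e₁ = s(u,v) ∈ B
        exfalso; apply hb₁
        rw [h1, h1']
        exact hBuv
      · -- x = u, x' = v, y = u, y' = v : loop in e₂
        exfalso
        rw [h2, h2'] at hadj₂
        exact G.loopless.irrefl v hadj₂
    rintro e₁ he₁ e₂ he₂ heq
    simp only [Finset.coe_sdiff, Set.mem_diff, Finset.mem_coe, Finset.mem_sdiff] at he₁ he₂
    induction e₁ with
    | h x y =>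
      induction e₂ with
      | h x' y' =>
        rw [Sym2.map_pair_eq, Sym2.map_pair_eq, Sym2.eq_iff] at heq
        rcases heq with ⟨h1, h2⟩ | ⟨h1, h2⟩
        · exact aux x y x' y' he₁.1 he₁.2 he₂.1 he₂.2 h1 h2
        · have he₂' : s(y', x') ∈ G.edgeFinset := by rw [Sym2.eq_swap]; exact he₂.1
          have hb₂' : s(y', x') ∉ B := by rw [Sym2.eq_swap]; exact he₂.2
          have := aux x y y' x' he₁.1 he₁.2 he₂' hb₂' h1 h2
          rwa [Sym2.eq_swap (a := y')] at this
end SG6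
end Stage2
section Stage3
namespace SG6
open SimpleGraph
variable {V : Type*}

lemma hasMinor_K5_of_clique [DecidableEq V] {G : SimpleGraph V} {s : Finset V}
    (hcard : s.card = 5)
    (hadj : ∀ x ∈ s, ∀ y ∈ s, x ≠ y → G.Adj x y) : G.HasMinor (completeGraph (Fin 5)) := by
  obtain ⟨e, einj⟩ : ∃ e : Fin 5 → ↥s, Function.Injective e :=
    ⟨fun i => s.equivFin.symm (Fin.cast hcard.symm i),
      fun i j h => Fin.cast_injective _ (s.equivFin.symm.injective h)⟩
  refine hasMinor_of_map (fun i => ↑(e i)) (fun i j h => einj (Subtype.ext h)) ?_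
  intro a b hab
  have hne : (e a : V) ≠ (e b : V) := fun h => hab (einj (Subtype.ext h))
  exact hadj _ (e a).2 _ (e b).2 hne

lemma K5_local [Fintype V] [DecidableEq V] (G : SimpleGraph V) [DecidableRel G.Adj]
    (v : V) (hd4 : 4 ≤ G.degree v) (hd5 : G.degree v ≤ 5)
    (hcm : ∀ x y : V, G.Adj x y → 3 ≤ ((G.neighborFinset x) ∩ (G.neighborFinset y)).card) :
    G.HasMinor (completeGraph (Fin 5)) := by
  classical
  set t := G.neighborFinset v with ht
  have htcard : t.card = G.degree v := rfl
  have hvt : v ∉ t := by simp [ht]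
  have hadjv : ∀ x ∈ t, G.Adj v x := by intro x hx; rwa [← mem_neighborFinset]
  have hkey : ∀ x ∈ t, 3 ≤ ((t.erase x) ∩ G.neighborFinset x).card := by
    intro x hx
    refine le_trans (hcm v x (hadjv x hx)) (Finset.card_le_card ?_)
    intro y hy
    rw [Finset.mem_inter] at hy ⊢
    rw [Finset.mem_erase]
    refine ⟨⟨?_, hy.1⟩, hy.2⟩
    rintro rfl
    exact G.loopless.irrefl _ ((G.mem_neighborFinset _ _).mp hy.2)
  have hstar : ∀ x y, x ∈ t → y ∈ t → x ≠ y → ¬G.Adj x y →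
      ∀ z ∈ t, z ≠ x → z ≠ y → G.Adj x z := by
    intro x y hx hy hxy hnadj z hz hzx hzy
    by_contra hnz
    have hsubb : (t.erase x) ∩ G.neighborFinset x ⊆ ((t.erase x).erase y).erase z := by
      intro w hw
      rw [Finset.mem_inter, mem_neighborFinset] at hw
      rw [Finset.mem_erase, Finset.mem_erase]
      refine ⟨?_, ?_, hw.1⟩
      · rintro rfl; exact hnz hw.2
      · rintro rfl; exact hnadj hw.2
    have hb := (hkey x hx).trans (Finset.card_le_card hsubb)
    rw [Finset.card_erase_of_mem, Finset.card_erase_of_mem, Finset.card_erase_of_mem hx] at hb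
    · omega
    · exact Finset.mem_erase.mpr ⟨hxy.symm, hy⟩
    · exact Finset.mem_erase.mpr ⟨hzy, Finset.mem_erase.mpr ⟨hzx, hz⟩⟩
  rcases Nat.eq_or_lt_of_le hd4 with hdeg4 | hdeg5
  · -- degree 4 : t ∪ {v} is a 5-clique
    have ht4 : t.card = 4 := by omega
    have hcl : ∀ x ∈ t, ∀ z ∈ t, x ≠ z → G.Adj x z := by
      intro x hx z hz hne
      by_contra hnadj
      have hsubb : (t.erase x) ∩ G.neighborFinset x ⊆ (t.erase x).erase z := by
        intro w hw
        rw [Finset.mem_inter, mem_neighborFinset] at hw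
        rw [Finset.mem_erase]
        refine ⟨?_, hw.1⟩
        rintro rfl
        exact hnadj hw.2
      have hb := (hkey x hx).trans (Finset.card_le_card hsubb)
      rw [Finset.card_erase_of_mem, Finset.card_erase_of_mem hx] at hb
      · omega
      · exact Finset.mem_erase.mpr ⟨fun h => hne h.symm, hz⟩
    refine hasMinor_K5_of_clique (s := insert v t) ?_ ?_
    · rw [Finset.card_insert_of_notMem hvt]; omega
    · intro x hx y hy hxy
      rcases Finset.mem_insert.mp hx with rfl | hx
      · rcases Finset.mem_insert.mp hy with rfl | hy
        · exact absurd rfl hxy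
        · exact hadjv y hy
      · rcases Finset.mem_insert.mp hy with rfl | hy
        · exact (hadjv x hx).symm
        · exact hcl x hx y hy hxy
  · have ht5 : t.card = 5 := by omega
    by_cases hall : ∀ x ∈ t, ∀ z ∈ t, x ≠ z → G.Adj x z
    · exact hasMinor_K5_of_clique ht5 hall
    · push_neg at hall
      obtain ⟨a, ha, b, hb, hneab, hnab⟩ := hall
      have hnba : ¬ G.Adj b a := fun h => hnab h.symm
      have hAstar : ∀ z ∈ t, z ≠ a → z ≠ b → G.Adj a z := hstar a b ha hb hneab hnab
      have hBstar : ∀ z ∈ t, z ≠ b → z ≠ a → G.Adj b z := hstar b a hb ha hneab.symm hnba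
      set t' := (t.erase a).erase b with ht'
      have ht'sub : t' ⊆ t := (Finset.erase_subset _ _).trans (Finset.erase_subset _ _)
      have ht'card : t'.card = 3 := by
        rw [ht', Finset.card_erase_of_mem, Finset.card_erase_of_mem ha]
        · omega
        · exact Finset.mem_erase.mpr ⟨hneab.symm, hb⟩
      have ht'a : ∀ z ∈ t', z ≠ a := fun z hz =>
        (Finset.mem_erase.mp (Finset.mem_erase.mp hz).2).1
      have ht'b : ∀ z ∈ t', z ≠ b := fun z hz => (Finset.mem_erase.mp hz).1
      by_cases hall2 : ∀ x ∈ t', ∀ z ∈ t', x ≠ z → G.Adj x z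
      · -- {v, a} ∪ t' is a 5-clique
        have hat' : a ∉ t' := fun h => (ht'a a h) rfl
        have hvat' : v ∉ insert a t' := by
          rw [Finset.mem_insert]
          rintro (rfl | h)
          · exact hvt ha
          · exact hvt (ht'sub h)
        refine hasMinor_K5_of_clique (s := insert v (insert a t')) ?_ ?_
        · rw [Finset.card_insert_of_notMem hvat', Finset.card_insert_of_notMem hat']
          omega
        · intro x hx y hy hxy
          rcases Finset.mem_insert.mp hx with rfl | hx
          · rcases Finset.mem_insert.mp hy with rfl | hy
            · exact absurd rfl hxy
            · rcases Finset.mem_insert.mp hy with rfl | hy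
              · exact hadjv _ ha
              · exact hadjv _ (ht'sub hy)
          · rcases Finset.mem_insert.mp hy with rfl | hy
            · rcases Finset.mem_insert.mp hx with rfl | hx
              · exact (hadjv _ ha).symm
              · exact (hadjv _ (ht'sub hx)).symm
            · rcases Finset.mem_insert.mp hx with rfl | hx
              · rcases Finset.mem_insert.mp hy with rfl | hy
                · exact absurd rfl hxy
                · exact hAstar y (ht'sub hy) (ht'a y hy).symm.symm (ht'b y hy)
              · rcases Finset.mem_insert.mp hy with rfl | hy
                · exact (hAstar x (ht'sub hx) (ht'a x hx) (ht'b x hx)).symm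
                · exact hall2 x hx y hy hxy
      · push_neg at hall2
        obtain ⟨c, hc, d, hd, hnecd, hncd⟩ := hall2
        have hndc : ¬ G.Adj d c := fun h => hncd h.symm
        have hcd' : ((t'.erase c).erase d).card = 1 := by
          rw [Finset.card_erase_of_mem, Finset.card_erase_of_mem hc]
          · omega
          · exact Finset.mem_erase.mpr ⟨hnecd.symm, hd⟩
        obtain ⟨e₀, he₀⟩ := Finset.card_eq_one.mp hcd'
        have he₀mem : e₀ ∈ (t'.erase c).erase d := by rw [he₀]; exact Finset.mem_singleton_self _
        have he₀d : e₀ ≠ d := (Finset.mem_erase.mp he₀mem).1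
        have he₀c : e₀ ≠ c := (Finset.mem_erase.mp (Finset.mem_erase.mp he₀mem).2).1
        have he₀t' : e₀ ∈ t' := (Finset.mem_erase.mp (Finset.mem_erase.mp he₀mem).2).2
        have hct : c ∈ t := ht'sub hc
        have hdt : d ∈ t := ht'sub hd
        have het : e₀ ∈ t := ht'sub he₀t'
        have hca : c ≠ a := ht'a c hc
        have hcb : c ≠ b := ht'b c hc
        have hda : d ≠ a := ht'a d hd
        have hdb : d ≠ b := ht'b d hd
        have hea : e₀ ≠ a := ht'a e₀ he₀t'
        have heb : e₀ ≠ b := ht'b e₀ he₀t'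
        have hva : v ≠ a := fun h => hvt (h ▸ ha)
        have hvb : v ≠ b := fun h => hvt (h ▸ hb)
        have hvc : v ≠ c := fun h => hvt (h ▸ hct)
        have hvd : v ≠ d := fun h => hvt (h ▸ hdt)
        have hve : v ≠ e₀ := fun h => hvt (h ▸ het)
        have hCstar : ∀ z ∈ t, z ≠ c → z ≠ d → G.Adj c z := hstar c d hct hdt hnecd hncd
        have hDstar : ∀ z ∈ t, z ≠ d → z ≠ c → G.Adj d z := hstar d c hdt hct hnecd.symm hndc
        -- all adjacency facts, in both directions
        have hac : G.Adj a c := hAstar c hct hca.symm.symm hcb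
        have hca' : G.Adj c a := hac.symm
        have had : G.Adj a d := hAstar d hdt hda.symm.symm hdb
        have hda' : G.Adj d a := had.symm
        have hae : G.Adj a e₀ := hAstar e₀ het hea.symm.symm heb
        have hea' : G.Adj e₀ a := hae.symm
        have hbc : G.Adj b c := hBstar c hct hcb hca
        have hcb' : G.Adj c b := hbc.symm
        have hbd : G.Adj b d := hBstar d hdt hdb hda
        have hdb' : G.Adj d b := hbd.symm
        have hbe : G.Adj b e₀ := hBstar e₀ het heb hea
        have heb' : G.Adj e₀ b := hbe.symm
        have hce : G.Adj c e₀ := (hCstar e₀ het he₀c he₀d).symm.symm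
        have hec : G.Adj e₀ c := hce.symm
        have hde : G.Adj d e₀ := hDstar e₀ het he₀d he₀c
        have hed : G.Adj e₀ d := hde.symm
        have hva' : G.Adj v a := hadjv a ha
        have hav' : G.Adj a v := hva'.symm
        have hvb' : G.Adj v b := hadjv b hb
        have hbv' : G.Adj b v := hvb'.symm
        have hvd' : G.Adj v d := hadjv d hdt
        have hdv' : G.Adj d v := hvd'.symm
        have hve' : G.Adj v e₀ := hadjv e₀ het
        have hev' : G.Adj e₀ v := hve'.symm
        have hcv' : G.Adj c v := (hadjv c hct).symm
        have hvc' : G.Adj v c := hadjv c hct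
        -- contract the edge a–c and find a 5-clique
        have haC : a ≠ c := Ne.symm hca
        have hbC : b ≠ c := Ne.symm hcb
        have hdC : d ≠ c := hnecd.symm
        refine hasMinor_trans (hasMinor_contract G hac)
          (hasMinor_K5_of_clique
            (s := {⟨a, haC⟩, ⟨b, hbC⟩, ⟨d, hdC⟩, ⟨e₀, he₀c⟩, ⟨v, hvc⟩}) ?_ ?_)
        · rw [Finset.card_insert_of_notMem, Finset.card_insert_of_notMem,
            Finset.card_insert_of_notMem, Finset.card_insert_of_notMem,
            Finset.card_singleton]
          · simp only [Finset.mem_singleton, Subtype.mk.injEq]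
            exact Ne.symm hve
          · simp only [Finset.mem_insert, Finset.mem_singleton, Subtype.mk.injEq]
            push_neg
            exact ⟨he₀d.symm, hvd.symm⟩
          · simp only [Finset.mem_insert, Finset.mem_singleton, Subtype.mk.injEq]
            push_neg
            exact ⟨hdb.symm, heb.symm, hvb.symm⟩
          · simp only [Finset.mem_insert, Finset.mem_singleton, Subtype.mk.injEq]
            push_neg
            exact ⟨hneab, hda.symm, hea.symm, hva.symm⟩
        · intro x hx y hy hxy
          simp only [Finset.mem_insert, Finset.mem_singleton] at hx hy
          rcases hx with rfl | rfl | rfl | rfl | rfl <;>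
            rcases hy with rfl | rfl | rfl | rfl | rfl <;>
            first
              | exact absurd rfl hxy
              | exact ⟨hxy, Or.inl (by assumption)⟩
              | exact ⟨hxy, Or.inr (Or.inl ⟨rfl, by assumption⟩)⟩
              | exact ⟨hxy, Or.inr (Or.inr ⟨rfl, by assumption⟩)⟩
end SG6
end Stage3
section Stage4
namespace SG6
open SimpleGraph
universe u

lemma lemA : ∀ (n : ℕ) (V : Type u) [Fintype V] [DecidableEq V] (G : SimpleGraph V)
    [DecidableRel G.Adj], Fintype.card V = n → 2 ≤ n →
    ¬ G.HasMinor (completeGraph (Fin 5)) →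
    G.edgeFinset.card + 5 ≤ 3 * n := by
  intro n
  induction n using Nat.strong_induction_on with
  | _ n ih =>
    intro V _ _ G _ hcard hn2 h5
    classical
    by_contra hbig
    push_neg at hbig
    have hmax : G.edgeFinset.card ≤ n.choose 2 := by
      have := G.card_edgeFinset_le_card_choose_two
      rwa [hcard] at this
    have hn3 : 3 ≤ n := by
      by_contra h
      have hn2' : n = 2 := by omega
      subst hn2'
      rw [Nat.choose_self] at hmax
      omega
    obtain ⟨t, hts, htc⟩ :=
      Finset.exists_subset_card_eq (show 3 * n - 4 ≤ G.edgeFinset.card by omega)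
    set Gm := fromEdgeSet (↑t : Set (Sym2 V)) with hGmdef
    have hsubE : (↑t : Set (Sym2 V)) ⊆ G.edgeSet := by
      rw [← coe_edgeFinset]
      exact_mod_cast hts
    have hle : Gm ≤ G := by
      calc Gm = fromEdgeSet ↑t := rfl
        _ ≤ fromEdgeSet G.edgeSet := fromEdgeSet_mono hsubE
        _ = G := fromEdgeSet_edgeSet G
    have hedge : ∀ (i : Fintype Gm.edgeSet), (@SimpleGraph.edgeFinset V Gm i).card = 3 * n - 4 := by
      intro i
      have he : (@SimpleGraph.edgeFinset V Gm i) = t := by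
        ext e
        simp only [mem_edgeFinset, hGmdef, edgeSet_fromEdgeSet, Set.mem_diff, Finset.mem_coe,
          Set.mem_setOf_eq]
        constructor
        · exact fun h => h.1
        · intro h
          exact ⟨h, G.not_isDiag_of_mem_edgeSet (hsubE h)⟩
      rw [he, htc]
    have hKm : ¬ Gm.HasMinor (completeGraph (Fin 5)) := fun h => h5 (hasMinor_mono hle h)
    have hsum := Gm.sum_degrees_eq_twice_card_edges
    rw [hedge _] at hsum
    -- a vertex of degree at most 5
    have hminv : ∃ v : V, Gm.degree v ≤ 5 := by
      by_contra hno
      push_neg at hno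
      have h6 : ∀ v : V, 6 ≤ Gm.degree v := fun v => hno v
      have hns := Finset.card_nsmul_le_sum Finset.univ (fun v => Gm.degree v) 6
        (fun v _ => h6 v)
      rw [Finset.card_univ, hcard, smul_eq_mul] at hns
      omega
    by_cases hlow : ∃ w : V, Gm.degree w ≤ 2
    · -- delete a vertex of degree ≤ 2
      obtain ⟨w, hw2⟩ := hlow
      have hcard' : Fintype.card {x : V // x ≠ w} = n - 1 := by
        rw [Fintype.card_subtype_compl, Fintype.card_subtype_eq, hcard]
      have hnon : Nonempty {x : V // x ≠ w} := by
        rw [← Fintype.card_pos_iff, hcard']; omega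
      obtain ⟨w₀⟩ := hnon
      have hdel := card_edge_delete Gm w w₀
      have hmd : ¬ (Gm.comap (Subtype.val : {x : V // x ≠ w} → V)).HasMinor
          (completeGraph (Fin 5)) := fun hm =>
        hKm (hasMinor_trans
          (hasMinor_of_map Subtype.val Subtype.val_injective (fun _ _ h => h)) hm)
      have hIH := ih (n-1) (by omega) {x : V // x ≠ w}
        (Gm.comap (Subtype.val : {x : V // x ≠ w} → V)) hcard' (by omega) hmd
      rw [hedge _] at hdel
      omega
    push_neg at hlow
    by_cases hpair : ∃ u w : V, Gm.Adj u w ∧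
        (Gm.neighborFinset u ∩ Gm.neighborFinset w).card ≤ 2
    · -- contract an edge with few common neighbours
      obtain ⟨u, w, hadj, hcom⟩ := hpair
      have hcard' : Fintype.card {x : V // x ≠ w} = n - 1 := by
        rw [Fintype.card_subtype_compl, Fintype.card_subtype_eq, hcard]
      have hcon := card_edge_contract Gm hadj
      have hmc : ¬ (contract Gm u w).HasMinor (completeGraph (Fin 5)) := fun hm =>
        hKm (hasMinor_trans (hasMinor_contract Gm hadj) hm)
      have hIH := ih (n-1) (by omega) {x : V // x ≠ w} (contract Gm u w) hcard'
        (by omega) hmc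
      rw [hedge _] at hcon
      omega
    · push_neg at hpair
      obtain ⟨v, hv5⟩ := hminv
      have hv3 : 3 ≤ Gm.degree v := hlow v
      have hv4 : 4 ≤ Gm.degree v := by
        rcases Nat.eq_or_lt_of_le hv3 with h3 | h
        · exfalso
          have hpos : 0 < (Gm.neighborFinset v).card := by
            rw [Gm.card_neighborFinset_eq_degree]; omega
          obtain ⟨u, hu⟩ := Finset.card_pos.mp hpos
          have hadj : Gm.Adj v u := by rwa [mem_neighborFinset] at hu
          have hcom := hpair v u hadj
          have hsub2 : Gm.neighborFinset v ∩ Gm.neighborFinset u ⊆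
              (Gm.neighborFinset v).erase u := by
            intro x hx
            rw [Finset.mem_inter] at hx
            rw [Finset.mem_erase]
            refine ⟨?_, hx.1⟩
            rintro rfl
            exact Gm.loopless.irrefl _ (by rw [← mem_neighborFinset (G := Gm)]; exact hx.2)
          have hcb := hcom.trans_le (Finset.card_le_card hsub2)
          rw [Finset.card_erase_of_mem hu, Gm.card_neighborFinset_eq_degree] at hcb
          omega
        · omega
      exact hKm (K5_local Gm v hv4 hv5 (fun x y h => by
        have := hpair x y h
        omega))
end SG6
end Stage4
section Stage5
namespace SG6
open SimpleGraph

variable {V : Type*}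

/-- The graph on `L` obtained by contracting each vertex of `S` into its chosen
neighbour `F s`. -/
def pairGraph (G : SimpleGraph V) (S : Finset V) (F : V → V) (L : Finset V) :
    SimpleGraph ↥L where
  Adj a b := a ≠ b ∧ ∃ s ∈ S, ((F s = ↑a ∧ G.Adj s ↑b) ∨ (F s = ↑b ∧ G.Adj s ↑a))
  symm := by
    constructor
    rintro a b ⟨hne, s, hs, hc⟩
    exact ⟨hne.symm, s, hs, hc.symm⟩
  loopless := ⟨fun a h => h.1 rfl⟩

lemma pairGraph_minor [DecidableEq V] (G : SimpleGraph V) (S : Finset V) (F : V → V)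
    (L : Finset V) (hFadj : ∀ s ∈ S, G.Adj s (F s)) (hSL : ∀ x ∈ S, x ∉ L) :
    G.HasMinor (pairGraph G S F L) := by
  refine ⟨fun a => insert (↑a : V) {x : V | x ∈ S ∧ F x = ↑a}, ?_, ?_, ?_⟩
  · intro a
    refine star_connected ?_
    rintro x ⟨hxS, hxF⟩
    have := hFadj x hxS
    rw [hxF] at this
    exact this.symm
  · intro a b hne
    have hval : (a : V) ≠ (b : V) := fun h => hne (Subtype.ext h)
    rw [Set.disjoint_left]
    rintro x (rfl | ⟨hxS, hxF⟩) hx'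
    · rcases hx' with h | ⟨hxS, hxF⟩
      · exact hval h
      · exact hSL _ hxS a.2
    · rcases hx' with h | ⟨hxS', hxF'⟩
      · exact hSL _ hxS (h ▸ b.2)
      · exact hval (hxF ▸ hxF' ▸ rfl)
  · rintro a b ⟨hne, s, hs, ⟨hFs, hadj⟩ | ⟨hFs, hadj⟩⟩
    · exact ⟨s, Or.inr ⟨hs, hFs⟩, ↑b, Or.inl rfl, hadj⟩
    · exact ⟨↑a, Or.inl rfl, s, Or.inr ⟨hs, hFs⟩, hadj.symm⟩

end SG6
end Stage5
open SimpleGraph in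
/-- a planar simple graph with minimum degree at least 2 in which every two
distinct vertices have at most two common neighbors contains an edge `uv` with
`d(u) + d(v) ≤ 39`. -/
theorem stmt_6 {V : Type*} [Fintype V] [DecidableEq V] [Nonempty V] (G : SimpleGraph V)
    [DecidableRel G.Adj] (hplanar : G.IsPlanar)
    (hmin : ∀ x : V, 2 ≤ G.degree x)
    (hcn : ∀ a b : V, a ≠ b → (G.neighborFinset a ∩ G.neighborFinset b).card ≤ 2) :
    ∃ u v : V, G.Adj u v ∧ G.degree u + G.degree v ≤ 39 := by
  classical
  by_contra hcon
  push_neg at hcon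
  set S : Finset V := Finset.univ.filter (fun x => G.degree x ≤ 19) with hSdef
  set L : Finset V := Finset.univ.filter (fun x => 20 ≤ G.degree x) with hLdef
  have hmemS : ∀ x, x ∈ S ↔ G.degree x ≤ 19 := fun x => by simp [hSdef]
  have hmemL : ∀ x, x ∈ L ↔ 20 ≤ G.degree x := fun x => by simp [hLdef]
  have hnbrL : ∀ x, x ∈ S → ∀ y, G.Adj x y → y ∈ L := by
    intro x hx y hadj
    have h1 := hcon x y hadj
    rw [hmemS] at hx
    rw [hmemL]
    omega
  have hnbr : ∀ x : V, ∃ y, G.Adj x y := by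
    intro x
    have hp : 0 < (G.neighborFinset x).card := by
      rw [G.card_neighborFinset_eq_degree]
      have := hmin x; omega
    obtain ⟨y, hy⟩ := Finset.card_pos.mp hp
    exact ⟨y, by rwa [mem_neighborFinset] at hy⟩
  have hLne : L.Nonempty := by
    obtain ⟨y, hy⟩ := hnbr (Classical.arbitrary V)
    by_cases h : G.degree (Classical.arbitrary V) ≤ 19
    · exact ⟨y, hnbrL _ ((hmemS _).mpr h) y hy⟩
    · exact ⟨Classical.arbitrary V, (hmemL (Classical.arbitrary V)).mpr (by omega)⟩
  have hL2 : 2 ≤ L.card := by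
    by_contra hlt
    have h1 : L.card = 1 := by
      have := Finset.card_pos.mpr hLne; omega
    obtain ⟨w, hw⟩ := Finset.card_eq_one.mp h1
    obtain ⟨u, hu⟩ := hnbr w
    have huw : u ≠ w := hu.ne'
    have hsmallu : u ∈ S := by
      rw [hmemS]
      by_contra hbig
      have huL : u ∈ L := (hmemL u).mpr (by omega)
      rw [hw, Finset.mem_singleton] at huL
      exact huw huL
    have hsub : G.neighborFinset u ⊆ {w} := by
      intro y hy
      have hyL : y ∈ L := hnbrL u hsmallu y (by rwa [mem_neighborFinset] at hy)
      rwa [hw] at hyL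
    have hd1 : G.degree u ≤ 1 := by
      rw [← G.card_neighborFinset_eq_degree]
      exact (Finset.card_le_card hsub).trans (by simp)
    have := hmin u; omega
  -- the induced graph on L
  set IndL := G.comap (Subtype.val : ↥L → V) with hGL
  have hGLfree : ¬ IndL.HasMinor (completeGraph (Fin 5)) := fun hm =>
    hplanar.1 (SG6.hasMinor_trans
      (SG6.hasMinor_of_map Subtype.val Subtype.val_injective (fun _ _ h => h)) hm)
  have hGLcardV : Fintype.card ↥L = L.card := Fintype.card_coe L
  have ihL := SG6.lemA L.card ↥L IndL hGLcardV hL2 hGLfree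
  -- the choice of a neighbour for every vertex
  choose F hF using hnbr
  have hFL : ∀ s ∈ S, F s ∈ L := fun s hs => hnbrL s hs (F s) (hF s)
  -- the contracted star graph
  set P2 := SG6.pairGraph G S F L with hP2
  have hSnotL : ∀ x ∈ S, x ∉ L := by
    intro x hx hxL; rw [hmemS] at hx; rw [hmemL] at hxL; omega
  have hPminor := SG6.pairGraph_minor G S F L (fun s _ => hF s) hSnotL
  have hPfree : ¬ P2.HasMinor (completeGraph (Fin 5)) := fun hm =>
    hplanar.1 (SG6.hasMinor_trans hPminor hm)
  have ihP := SG6.lemA L.card ↥L P2 hGLcardV hL2 hPfree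
  -- counting
  set M := ∑ s ∈ S, (G.degree s - 1) with hM
  set DS := ∑ s ∈ S, G.degree s with hDS
  have hDSM : DS = M + S.card := by
    rw [hDS, hM]
    have h1 : ∀ s ∈ S, G.degree s = (G.degree s - 1) + 1 := by
      intro s _; have := hmin s; omega
    rw [Finset.sum_congr rfl h1, Finset.sum_add_distrib]
    simp
  have hSM : S.card ≤ M := by
    rw [hM]
    calc S.card = ∑ _s ∈ S, 1 := by simp
      _ ≤ ∑ s ∈ S, (G.degree s - 1) :=
          Finset.sum_le_sum (fun s _ => by have := hmin s; omega)
  -- KEY 1 : M ≤ 2 * #edges of P2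
  set T := S.sigma (fun s => (G.neighborFinset s).erase (F s)) with hT
  have hTcard : T.card = M := by
    rw [hT, Finset.card_sigma, hM]
    refine Finset.sum_congr rfl fun s _ => ?_
    rw [Finset.card_erase_of_mem (by rw [mem_neighborFinset]; exact hF s),
      G.card_neighborFinset_eq_degree]
  obtain ⟨l₀, hl₀⟩ := hLne
  set toL : V → ↥L := fun x => if h : x ∈ L then ⟨x, h⟩ else ⟨l₀, hl₀⟩ with htoL
  have htoLval : ∀ x (h : x ∈ L), toL x = ⟨x, h⟩ := fun x h => dif_pos h
  set φ : (Σ _ : V, V) → Sym2 ↥L := fun p => s(toL (F p.1), toL p.2) with hφ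
  have hmemT : ∀ s x, (⟨s, x⟩ : Σ _ : V, V) ∈ T ↔ s ∈ S ∧ x ≠ F s ∧ G.Adj s x := by
    intro s x
    rw [hT, Finset.mem_sigma, Finset.mem_erase, mem_neighborFinset]
  have hmapsto : ∀ p ∈ T, φ p ∈ P2.edgeFinset := by
    rintro ⟨s, b⟩ hp
    rw [hmemT] at hp
    obtain ⟨hsS, hbF, hadj⟩ := hp
    have hbL : b ∈ L := hnbrL s hsS b hadj
    have hFsL : F s ∈ L := hFL s hsS
    rw [hφ]
    dsimp only
    rw [htoLval _ hFsL, htoLval _ hbL, mem_edgeFinset, mem_edgeSet]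
    refine ⟨fun h => hbF (congrArg Subtype.val h).symm, s, hsS, Or.inl ⟨rfl, hadj⟩⟩
  have hfiber : ∀ b ∈ P2.edgeFinset, (T.filter (fun p => φ p = b)).card ≤ 2 := by
    intro b
    induction b with
    | h A B =>
      intro hb
      have hAdj : P2.Adj A B := (P2.mem_edgeSet).mp (mem_edgeFinset.mp hb)
      have hABne : A ≠ B := hAdj.ne
      have hvalne : (A : V) ≠ (B : V) := fun h => hABne (Subtype.ext h)
      have hcn2 := hcn ↑A ↑B hvalne
      refine le_trans (Finset.card_le_card_of_injOn (fun p => p.1) ?_ ?_) hcn2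
      · rintro ⟨s, x⟩ hp
        rw [Finset.mem_coe, Finset.mem_filter, hmemT] at hp
        obtain ⟨⟨hsS, hxF, hadj⟩, hpe⟩ := hp
        have hxL : x ∈ L := hnbrL s hsS x hadj
        have hFsL : F s ∈ L := hFL s hsS
        rw [hφ] at hpe
        dsimp only at hpe
        rw [htoLval _ hFsL, htoLval _ hxL, Sym2.eq_iff] at hpe
        rw [Finset.mem_coe, Finset.mem_inter, mem_neighborFinset, mem_neighborFinset]
        rcases hpe with ⟨h1, h2⟩ | ⟨h1, h2⟩
        · have e1 : F s = ↑A := congrArg Subtype.val h1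
          have e2 : x = ↑B := congrArg Subtype.val h2
          exact ⟨(e1 ▸ (hF s)).symm, (e2 ▸ hadj).symm⟩
        · have e1 : F s = ↑B := congrArg Subtype.val h1
          have e2 : x = ↑A := congrArg Subtype.val h2
          exact ⟨(e2 ▸ hadj).symm, (e1 ▸ (hF s)).symm⟩
      · rintro ⟨s, x⟩ hp ⟨s', y⟩ hq heq
        simp only [Finset.coe_filter, Set.mem_setOf_eq] at hp hq
        obtain ⟨hpT, hpe⟩ := hp
        obtain ⟨hqT, hqe⟩ := hq
        dsimp only at heq
        subst heq
        rw [hmemT] at hpT hqT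
        have hxL : x ∈ L := hnbrL s hpT.1 x hpT.2.2
        have hyL : y ∈ L := hnbrL s hqT.1 y hqT.2.2
        have hFsL : F s ∈ L := hFL s hpT.1
        rw [hφ] at hpe hqe
        dsimp only at hpe hqe
        rw [htoLval _ hFsL, htoLval _ hxL] at hpe
        rw [htoLval _ hFsL, htoLval _ hyL] at hqe
        rw [Sym2.eq_iff] at hpe hqe
        have hxy : x = y := by
          rcases hpe with ⟨h1, h2⟩ | ⟨h1, h2⟩ <;> rcases hqe with ⟨h1', h2'⟩ | ⟨h1', h2'⟩
          · exact congrArg Subtype.val (h2.trans h2'.symm)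
          · exact absurd (h1.symm.trans h1') hABne
          · exact absurd (h1'.symm.trans h1) hABne
          · exact congrArg Subtype.val (h2.trans h2'.symm)
        rw [hxy]
  have hKEY1 : M ≤ 2 * P2.edgeFinset.card := by
    rw [← hTcard]
    exact Finset.card_le_mul_card_image_of_maps_to hmapsto 2 hfiber
  -- KEY 2 : degree sum over L
  set DL := ∑ l ∈ L, G.degree l with hDL
  have hGLdeg : ∀ a : ↥L, IndL.degree a =
      ((G.neighborFinset ↑a).filter (fun x => x ∈ L)).card := by
    intro a
    rw [← IndL.card_neighborFinset_eq_degree]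
    refine Finset.card_bij (fun b _ => ↑b) ?_ ?_ ?_
    · intro b hb
      rw [mem_neighborFinset] at hb
      rw [Finset.mem_filter, mem_neighborFinset]
      exact ⟨hb, b.2⟩
    · intro b _ b' _ h
      exact Subtype.ext h
    · intro x hx
      rw [Finset.mem_filter, mem_neighborFinset] at hx
      exact ⟨⟨x, hx.2⟩, by rw [mem_neighborFinset]; exact hx.1, rfl⟩
  have hsumL : ∑ l ∈ L, ((G.neighborFinset l).filter (fun x => x ∈ L)).card
      = 2 * IndL.edgeFinset.card := by
    rw [← IndL.sum_degrees_eq_twice_card_edges, ← Finset.sum_coe_sort L]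
    exact Finset.sum_congr rfl fun a _ => (hGLdeg a).symm
  have hswap : ∑ l ∈ L, ((G.neighborFinset l).filter (fun x => x ∈ S)).card
      = ∑ s ∈ S, ((G.neighborFinset s).filter (fun x => x ∈ L)).card := by
    rw [← Finset.card_sigma, ← Finset.card_sigma]
    refine Finset.card_bij (fun p _ => ⟨p.2, p.1⟩) ?_ ?_ ?_
    · rintro ⟨l, x⟩ hp
      simp only [Finset.mem_sigma, Finset.mem_filter, mem_neighborFinset] at hp ⊢
      exact ⟨hp.2.2, hp.2.1.symm, hp.1⟩
    · rintro ⟨l, x⟩ _ ⟨l', x'⟩ _ h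
      have h1 : x = x' := congrArg (fun z : (Σ _ : V, V) => z.1) h
      have h2 : l = l' := congrArg (fun z : (Σ _ : V, V) => z.2) h
      subst h1; subst h2; rfl
    · rintro ⟨s, l⟩ hq
      simp only [Finset.mem_sigma, Finset.mem_filter, mem_neighborFinset] at hq
      refine ⟨⟨l, s⟩, ?_, rfl⟩
      simp only [Finset.mem_sigma, Finset.mem_filter, mem_neighborFinset]
      exact ⟨hq.2.2, hq.2.1.symm, hq.1⟩
  have hSfilter : ∀ s ∈ S,
      (G.neighborFinset s).filter (fun x => x ∈ L) = G.neighborFinset s := by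
    intro s hs
    refine Finset.filter_eq_self.mpr ?_
    intro y hy
    exact hnbrL s hs y (by rwa [mem_neighborFinset] at hy)
  have hdegsplit : ∀ l : V, G.degree l =
      ((G.neighborFinset l).filter (fun x => x ∈ S)).card
      + ((G.neighborFinset l).filter (fun x => x ∈ L)).card := by
    intro l
    rw [← G.card_neighborFinset_eq_degree,
      ← Finset.card_filter_add_card_filter_not (p := fun x => x ∈ S)]
    congr 1
    refine congrArg Finset.card (Finset.filter_congr ?_)
    intro x _
    rw [hmemS, hmemL]
    omega
  have hKEY2 : DL = DS + 2 * IndL.edgeFinset.card := by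
    rw [hDL]
    calc ∑ l ∈ L, G.degree l
        = ∑ l ∈ L, (((G.neighborFinset l).filter (fun x => x ∈ S)).card
          + ((G.neighborFinset l).filter (fun x => x ∈ L)).card) :=
            Finset.sum_congr rfl fun l _ => hdegsplit l
      _ = (∑ l ∈ L, ((G.neighborFinset l).filter (fun x => x ∈ S)).card)
          + ∑ l ∈ L, ((G.neighborFinset l).filter (fun x => x ∈ L)).card :=
            Finset.sum_add_distrib
      _ = (∑ s ∈ S, ((G.neighborFinset s).filter (fun x => x ∈ L)).card)
          + 2 * IndL.edgeFinset.card := by rw [hswap, hsumL]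
      _ = DS + 2 * IndL.edgeFinset.card := by
          rw [hDS]
          congr 1
          refine Finset.sum_congr rfl fun s hs => ?_
          rw [hSfilter s hs, G.card_neighborFinset_eq_degree]
  have hKEY3 : 20 * L.card ≤ DL := by
    rw [hDL]
    have h20 := Finset.card_nsmul_le_sum L (fun l => G.degree l) 20
      (fun l hl => (hmemL l).mp hl)
    rwa [smul_eq_mul, mul_comm] at h20
  omega
end

section
/- Every 5-connected planar simple graph has the property that every two distinct vertices have at most two common neighbors. -/
namespace SimpleGraph

variable {V : Type*} {G : SimpleGraph V}

namespace ComponentCompl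

variable {K : Set V}

theorem connected_coeGraph (C : G.ComponentCompl K) : C.coeGraph.Connected := by
  refine C.connected_toSimpleGraph.map ⟨fun w => ⟨w.1.1, w.1.2, w.2⟩, fun h => h⟩ ?_
  rintro ⟨v, hvK, hvC⟩
  exact ⟨⟨⟨v, hvK⟩, hvC⟩, rfl⟩

theorem exists_adj_of_preconnected {v : V} (hv : v ∈ K)
    (hconn : (G.induce (K \ {v})ᶜ).Preconnected) (C : G.ComponentCompl K) :
    ∃ c ∈ C, G.Adj c v := by
  obtain ⟨u, huK, rfl⟩ := C.exists_eq_mk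
  by_contra! hnadj
  obtain ⟨p⟩ := hconn ⟨u, fun h => huK h.1⟩ ⟨v, fun h => h.2 rfl⟩
  -- a walk from `C` to `v` avoiding `K \ {v}` can only leave `C` into `v`
  obtain ⟨⟨⟨c, w⟩, hcw⟩, -, hc, hw⟩ := p.exists_boundary_dart (Subtype.val ⁻¹' _)
    (G.componentComplMk_mem huK) (fun h => notMem_of_mem h hv)
  have hwK : (w : V) ∈ K := by_contra fun hwK => hw (mem_of_adj _ _ hc hwK hcw)
  have hwv : (w : V) = v := by_contra fun h => w.2 ⟨hwK, h⟩
  exact hnadj c hc ((congrArg (G.Adj c) hwv).mp hcw)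

end ComponentCompl

theorem connected_induce_singleton (v : V) : (G.induce {v}).Connected := by
  simp

theorem hasMinor_completeBipartiteGraph {α β : Type*} (A : α → Set V) (x : β → V)
    (hA : ∀ i, (G.induce (A i)).Connected) (hAdisj : Pairwise (Function.onFun Disjoint A))
    (hx : x.Injective) (hxA : ∀ i j, x j ∉ A i) (hadj : ∀ i j, ∃ c ∈ A i, G.Adj c (x j)) :
    G.HasMinor (completeBipartiteGraph α β) := by
  refine ⟨Sum.elim A fun j => {x j}, ?_, ?_, ?_⟩
  · rintro (i | j)
    exacts [hA i, connected_induce_singleton _]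
  · rintro (i | j) (i' | j') hne
    · exact hAdisj fun h => hne (congrArg _ h)
    · exact Set.disjoint_singleton_right.mpr (hxA i j')
    · exact Set.disjoint_singleton_left.mpr (hxA i' j)
    · exact Set.disjoint_singleton.mpr (hx.ne fun h => hne (congrArg _ h))
  · rintro (i | j) (i' | j') hij
    · simp at hij
    · obtain ⟨c, hc, hcx⟩ := hadj i j'
      exact ⟨c, hc, x j', rfl, hcx⟩
    · obtain ⟨c, hc, hcx⟩ := hadj i' j
      exact ⟨x j, rfl, c, hc, hcx.symm⟩
    · simp at hij

namespace IsKConnected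

variable [Fintype V] {k : ℕ} {K : Set V}

theorem nonempty_componentCompl (hG : G.IsKConnected k) (hK : K.ncard ≤ k) :
    Nonempty (G.ComponentCompl K) := by
  obtain ⟨u, hu⟩ : Kᶜ.Nonempty := Set.nonempty_compl.mpr fun h => by
    rw [h, Set.ncard_univ, Nat.card_eq_fintype_card] at hK
    exact hK.not_gt hG.1
  exact ⟨G.componentComplMk hu⟩

theorem exists_adj_of_mem (hG : G.IsKConnected k) (hK : K.ncard ≤ k) {v : V} (hv : v ∈ K)
    (C : G.ComponentCompl K) : ∃ c ∈ C, G.Adj c v := by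
  refine C.exists_adj_of_preconnected hv (hG.2 _ ?_).preconnected
  rw [Set.ncard_sdiff_singleton_of_mem hv]
  have := (Set.ncard_pos).mpr ⟨v, hv⟩
  omega

theorem hasMinor_K33_of_commonNeighbors (hG : G.IsKConnected 5) {a b : V} (hab : a ≠ b)
    {x : Fin 3 → V} (hx : x.Injective) (ha : ∀ j, G.Adj a (x j)) (hb : ∀ j, G.Adj b (x j)) :
    G.HasMinor (completeBipartiteGraph (Fin 3) (Fin 3)) := by
  set K : Set V := {a, b} ∪ Set.range x
  have hK : K.ncard ≤ 5 := calc
    K.ncard ≤ ({a, b} : Set V).ncard + (Set.range x).ncard := Set.ncard_union_le _ _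
    _ = 5 := by rw [Set.ncard_pair hab, Set.ncard_range_of_injective hx, Nat.card_fin]
  have haK : a ∈ K := by simp [K]
  have hbK : b ∈ K := by simp [K]
  have hxK : ∀ j, x j ∈ K := fun j => Or.inr ⟨j, rfl⟩
  obtain ⟨C⟩ := hG.nonempty_componentCompl hK
  refine hasMinor_completeBipartiteGraph ![{a}, {b}, C] x ?_ ?_ hx ?_ ?_
  · intro i
    fin_cases i
    exacts [connected_induce_singleton a, connected_induce_singleton b, C.connected_coeGraph]
  · have haC : a ∉ C := fun h => ComponentCompl.notMem_of_mem h haK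
    have hbC : b ∉ C := fun h => ComponentCompl.notMem_of_mem h hbK
    intro i i' hii'
    fin_cases i <;> fin_cases i' <;> simp [Function.onFun, hab, hab.symm, haC, hbC] at hii' ⊢
  · intro i j
    fin_cases i
    exacts [(ha j).ne', (hb j).ne', fun h => ComponentCompl.notMem_of_mem h (hxK j)]
  · intro i j
    fin_cases i
    exacts [⟨a, rfl, ha j⟩, ⟨b, rfl, hb j⟩, hG.exists_adj_of_mem hK (hxK j) C]

end IsKConnected

end SimpleGraph

/-- every 5-connected planar simple graph has the property that any two
distinct vertices have at most two common neighbors. -/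
theorem stmt_10 {V : Type*} [Fintype V] [DecidableEq V] (G : SimpleGraph V)
    [DecidableRel G.Adj] (hconn : G.IsKConnected 5) (hplanar : G.IsPlanar) :
    ∀ a b : V, a ≠ b → (G.neighborFinset a ∩ G.neighborFinset b).card ≤ 2 := by
  intro a b hab
  by_contra! hcard
  obtain ⟨x, hx, y, hy, z, hz, hxy, hxz, hyz⟩ := Finset.two_lt_card.mp hcard
  simp only [Finset.mem_inter, SimpleGraph.mem_neighborFinset] at hx hy hz
  refine hplanar.2 (hconn.hasMinor_K33_of_commonNeighbors hab (x := ![x, y, z]) ?_ ?_ ?_)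
  · intro i j h
    fin_cases i <;> fin_cases j <;> simp [hxy, hxz, hyz, hxy.symm, hxz.symm, hyz.symm] at h ⊢
  · simp [Fin.forall_fin_succ, hx.1, hy.1, hz.1]
  · simp [Fin.forall_fin_succ, hx.2, hy.2, hz.2]
end
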